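/- Fix k ≥ 2 and suppose all vertex weights are strictly positive and that for every j = 1,…,m−k+1 the subpath P_j := P_{j,j+k−1} has the same length l, i.e. d(p(j),p(j+k−1)) = l. Then the sequence S̄(P_1), S̄(P_2), …, S̄(P_{m−k+1}) is increasing–decreasing (unimodal): for every j with 1 ≤ j ≤ m−k−1, if S̄(P_j) > S̄(P_{j+1}) then S̄(P_{j+1}) > S̄(P_{j+2}). -/

import Mathlib

open scoped ENNReal

noncomputable section

/-- A finite tree with positive edge lengths, nonnegative vertex weights,
and a positive cruising speed. -/
structure WeightedTree (V : Type*) [Fintype V] where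
  G : SimpleGraph V
  isTree : G.IsTree
  len : Sym2 V → ℝ
  len_pos : ∀ e ∈ G.edgeSet, 0 < len e
  w : V → ℝ
  w_nonneg : ∀ v, 0 ≤ w v
  vt : ℝ
  vt_pos : 0 < vt

namespace WeightedTree

variable {V : Type*} [Fintype V] [DecidableEq V] (T : WeightedTree V)

/-- `d x y`: the length of the unique path between `x` and `y`. -/
def d (x y : V) : ℝ :=
  (((T.isTree.existsUnique_path x y).choose).edges.map T.len).sum

/-- The closest vertex of the list `l` (the vertex sequence of a path) to `v`. -/
def closest (l : List V) (v : V) : V :=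
  if h : ∃ u ∈ l, ∀ u' ∈ l, T.d u v ≤ T.d u' v then h.choose else v

/-- `d(P,v)`: the distance from the path with vertex sequence `l` to `v`. -/
def dP (l : List V) (v : V) : ℝ := T.d (T.closest l v) v

/-- The weight of the branch of the vertex `q` with respect to the path with
vertex sequence `l`: the total weight of all vertices whose closest vertex on
the path is `q`. -/
def wBranch (l : List V) (q : V) : ℝ :=
  ∑ v ∈ Finset.univ.filter (fun v => T.closest l v = q), T.w v

/-- `w(T)`: total weight of the tree. -/
def wT : ℝ := ∑ v, T.w v

/-- `d̄_P(û,p) = ∑_j w_{T_{p(j)}} d(p(j), p)` for the path with vertex sequence `l`. -/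
def dbar (l : List V) (p : V) : ℝ := (l.map (fun q => T.wBranch l q * T.d q p)).sum

/-- `s_p(P) = (1/vt) d̄_P(û,p)` for a vertex `p` of the path. -/
def sOn (l : List V) (p : V) : ℝ := (1 / T.vt) * T.dbar l p

/-- `s_i(P) = (1/vt) d̄_P(û,p(i))`, where `p(i)` is the closest vertex of the path to `v_i`. -/
def s (l : List V) (v : V) : ℝ := T.sOn l (T.closest l v)

/-- Mean service time `S̄(P)`. -/
def Sbar (l : List V) : ℝ := ∑ v, T.w v * T.s l v

/-- Second moment `S̄²(P)` of the service time. -/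
def S2bar (l : List V) : ℝ := ∑ v, T.w v * (T.s l v) ^ 2

/-- `T̄1(P) = (1/vt) ∑ w_i d(P, v_i)`. -/
def T1 (l : List V) : ℝ := (1 / T.vt) * ∑ v, T.w v * T.dP l v

/-- `T̄2(P) = (1/vt) ∑ w_i d̄_P(û, p(i))`. -/
def T2 (l : List V) : ℝ := (1 / T.vt) * ∑ v, T.w v * T.dbar l (T.closest l v)

/-- The M/G/1 queueing delay `Q̄(P)`, valued in `[0,∞]`. -/
def Qbar (lam : ℝ) (l : List V) : ℝ≥0∞ :=
  if 0 < 1 - lam * T.Sbar l then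
    ENNReal.ofReal (lam * T.S2bar l / (2 * (1 - lam * T.Sbar l)))
  else ⊤

/-- The M/G/1 queueing delay `Q̄(P)` as an extended real. -/
def QbarE (lam : ℝ) (l : List V) : EReal :=
  if 0 < 1 - lam * T.Sbar l then
    ((lam * T.S2bar l / (2 * (1 - lam * T.Sbar l)) : ℝ) : EReal)
  else ⊤

/-- `|P|`: the total length of the path `P`. -/
def plen {a b : V} (P : T.G.Walk a b) : ℝ := (P.edges.map T.len).sum

/-- The objective `F(P) = α1·|P| + α2·(β·(Q̄(P)+T̄2(P)) + (1-β)·T̄1(P))`. -/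
def F (α1 α2 β lam : ℝ) {a b : V} (P : T.G.Walk a b) : EReal :=
  ((α1 * T.plen P : ℝ) : EReal) +
    (α2 : EReal) *
      ((β : EReal) * (T.QbarE lam P.support + ((T.T2 P.support : ℝ) : EReal)) +
        (((1 - β) * T.T1 P.support : ℝ) : EReal))

end WeightedTree

/-- The vertex sequence `p(a), p(a+1), …, p(b)` of the subpath `P_{a,b}` of the path
with consecutive vertices `p(1), …, p(m)`. -/
def seg {V : Type*} (p : ℕ → V) (a b : ℕ) : List V :=
  (List.range (b + 1 - a)).map (fun i => p (a + i))

/-!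
Every vertex `v` has a gate `p g` on the path: `d(v, p i) = d(v, p g) + |t_i - t_g|`, where `t`
is the position along the path. Hence the closest vertex `c(v)` of a subpath `P_{a,b}` to `v`
is `p` of the gate index clamped to `[a, b]`. Now
`S̄(P_{a,b}) = (1/vt) ∑_{u,v} w_u w_v d(c(u), c(v))`, and `d(c(u), c(v))` is the total length
of the edges of `P_{a,b}` separating the gates of `u` and `v`; summing edge by edge,
`S̄(P_{a,b}) = (2/vt) ∑_{a ≤ s < b} λ_s C_s (W - C_s)` with `λ_s = d(p s, p (s+1))` and `C_s`
the weight of the vertices whose gate is at most `s`.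

Shifting the window `P_j` by one trades the edge `j` for the edge `j+k-1`, which has the same
length since both windows have length `l`. So
`S̄(P_{j+1}) - S̄(P_j) = (2/vt) λ_j (C_{j+k-1} - C_j) (W - C_j - C_{j+k-1})`. Positive weights
make `C` strictly increasing, so the sign of this difference is that of
`W - C_j - C_{j+k-1}`, which is nonincreasing in `j`.
-/

section Sequences

variable {f t : ℕ → ℝ} {R : ℕ → Prop} {a n : ℕ}

lemma exists_eq_add_abs_sub_of_steps (han : a ≤ n) (ht : Monotone t)
    (hR : ∀ i, a ≤ i → i + 2 ≤ n → R i → R (i + 1))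
    (hup : ∀ i, a ≤ i → i < n → R i → f (i + 1) = f i + (t (i + 1) - t i))
    (hdown : ∀ i, a ≤ i → i < n → ¬ R i → f i = f (i + 1) + (t (i + 1) - t i)) :
    ∃ g ∈ Set.Icc a n, ∀ i ∈ Set.Icc a n, f i = f g + |t i - t g| := by
  -- `R` holds on `[g, n')`: this pins down `g = n'` when `R` fails at the next step
  suffices ∀ n', a ≤ n' → n' ≤ n → ∃ g ∈ Set.Icc a n',
      (∀ i ∈ Set.Icc a n', f i = f g + |t i - t g|) ∧ ∀ i, g ≤ i → i < n' → R i by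
    obtain ⟨g, hg, hfg, -⟩ := this n han le_rfl
    exact ⟨g, hg, hfg⟩
  intro n' han'
  induction n', han' using Nat.le_induction with
  | base =>
    refine fun _ => ⟨a, ⟨le_rfl, le_rfl⟩, fun i hi => ?_, fun i h1 h2 => absurd h2 h1.not_gt⟩
    obtain rfl : i = a := le_antisymm hi.2 hi.1
    simp
  | succ n' hn' ih =>
    intro hle
    obtain ⟨g, ⟨hag, hgn'⟩, hfg, hRg⟩ := ih (by omega)
    by_cases hRn : R n'
    · refine ⟨g, ⟨hag, by omega⟩, fun i ⟨hi1, hi2⟩ => ?_, fun i h1 h2 => ?_⟩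
      · rcases (show i ≤ n' ∨ i = n' + 1 by omega) with hi' | rfl
        · exact hfg i ⟨hi1, hi'⟩
        rw [hup n' hn' (by omega) hRn, hfg n' ⟨hn', le_rfl⟩,
          abs_of_nonneg (sub_nonneg.2 (ht hgn')),
          abs_of_nonneg (sub_nonneg.2 (ht (hgn'.trans n'.le_succ)))]
        ring
      · rcases (show i < n' ∨ i = n' by omega) with hi' | rfl
        exacts [hRg i h1 hi', hRn]
    · have hgn : g = n' := by
        by_contra hne
        have hprev := hR (n' - 1) (by omega) (by omega) (hRg (n' - 1) (by omega) (by omega))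
        rw [Nat.sub_add_cancel (by omega)] at hprev
        exact hRn hprev
      subst hgn
      refine ⟨g + 1, ⟨by omega, le_rfl⟩, fun i ⟨hi1, hi2⟩ => ?_, fun i h1 h2 => absurd h2 h1.not_gt⟩
      rcases (show i ≤ g ∨ i = g + 1 by omega) with hi' | rfl
      · rw [hfg i ⟨hi1, hi'⟩, hdown g hn' (by omega) hRn, abs_of_nonpos (sub_nonpos.2 (ht hi')),
          abs_of_nonpos (sub_nonpos.2 (ht (hi'.trans g.le_succ)))]
        ring
      · simp

lemma abs_sum_range_sub_sum_range {μ : ℕ → ℝ} (hμ : ∀ s, 0 ≤ μ s) {a b x y : ℕ}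
    (hx : x ∈ Set.Icc a b) (hy : y ∈ Set.Icc a b) :
    |∑ s ∈ Finset.range x, μ s - ∑ s ∈ Finset.range y, μ s|
      = ∑ s ∈ Finset.Ico a b, if (x ≤ s ↔ y ≤ s) then 0 else μ s := by
  wlog hxy : x ≤ y generalizing x y
  · rw [abs_sub_comm, this hy hx (le_of_not_ge hxy)]
    simp only [iff_comm]
  obtain ⟨hax, -⟩ := hx
  obtain ⟨-, hyb⟩ := hy
  rw [abs_sub_comm, ← Finset.sum_Ico_eq_sub _ hxy,
    abs_of_nonneg (Finset.sum_nonneg fun s _ => hμ s), Finset.sum_ite, Finset.sum_const_zero,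
    zero_add]
  congr 1
  ext s
  simp only [Finset.mem_filter, Finset.mem_Ico]
  omega

lemma abs_sub_lt_abs_sub_clamp {t : ℕ → ℝ} {a b c i : ℕ}
    (ht : StrictMonoOn t (Set.Icc (min a c) (max b c))) (hi : i ∈ Set.Icc a b)
    (hne : i ≠ max a (min b c)) :
    |t (max a (min b c)) - t c| < |t i - t c| := by
  obtain ⟨hai, hib⟩ := hi
  rcases lt_or_ge c a with hca | hac
  · rw [show max a (min b c) = a by omega] at hne ⊢
    have h1 : t c < t a := ht ⟨by omega, by omega⟩ ⟨by omega, by omega⟩ hca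
    have h2 : t a < t i := ht ⟨by omega, by omega⟩ ⟨by omega, by omega⟩ (by omega)
    rw [abs_of_pos (by linarith), abs_of_pos (by linarith)]
    linarith
  rcases lt_or_ge b c with hbc | hcb
  · rw [show max a (min b c) = b by omega] at hne ⊢
    have h1 : t b < t c := ht ⟨by omega, by omega⟩ ⟨by omega, by omega⟩ hbc
    have h2 : t i < t b := ht ⟨by omega, by omega⟩ ⟨by omega, by omega⟩ (by omega)
    rw [abs_of_neg (by linarith), abs_of_neg (by linarith)]
    linarith
  rw [show max a (min b c) = c by omega] at hne ⊢
  rw [sub_self, abs_zero, abs_pos, sub_ne_zero]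
  exact fun h => hne (ht.injOn ⟨by omega, by omega⟩ ⟨by omega, by omega⟩ h)

lemma sum_sum_mul_ite_iff {ι R : Type*} [Fintype ι] [CommSemiring R] (w : ι → R) (A : ι → Prop)
    [DecidablePred A] (c : R) :
    ∑ u, ∑ v, w u * w v * (if A u ↔ A v then 0 else c)
      = 2 * c * (∑ u with A u, w u) * ∑ u with ¬ A u, w u := by
  have hinner : ∀ u, ∑ v, w u * w v * (if A u ↔ A v then 0 else c)
      = w u * c * if A u then ∑ v with ¬ A v, w v else ∑ v with A v, w v := by
    intro u
    by_cases hu : A u <;>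
      simp [hu, Finset.sum_filter, Finset.mul_sum, mul_comm, mul_left_comm]
  rw [Finset.sum_congr rfl fun u _ => hinner u]
  simp only [mul_ite, Finset.sum_ite, ← Finset.sum_mul]
  ring

end Sequences

section Segments

variable {V : Type*} {p : ℕ → V} {a b : ℕ}

lemma mem_seg {u : V} : u ∈ seg p a b ↔ ∃ i ∈ Set.Icc a b, p i = u := by
  simp only [seg, List.mem_map, List.mem_range, Set.mem_Icc]
  constructor
  · rintro ⟨i, hi, rfl⟩
    exact ⟨a + i, ⟨by omega, by omega⟩, rfl⟩
  · rintro ⟨i, ⟨hai, hib⟩, rfl⟩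
    exact ⟨i - a, by omega, by rw [Nat.add_sub_cancel' hai]⟩

lemma seg_ne_nil (hab : a ≤ b) : seg p a b ≠ [] := by
  simp only [seg, ne_eq, List.map_eq_nil_iff, List.range_eq_nil]
  omega

lemma nodup_seg (hp : Set.InjOn p (Set.Icc a b)) : (seg p a b).Nodup := by
  refine List.Nodup.map_on (fun i hi j hj hij => ?_) List.nodup_range
  rw [List.mem_range] at hi hj
  have := hp ⟨Nat.le_add_right a i, by omega⟩ ⟨Nat.le_add_right a j, by omega⟩ hij
  omega

end Segments

namespace SimpleGraph.Walk

variable {V : Type*} {G : SimpleGraph V} {x y : V} {W : G.Walk x y} {p : ℕ → V} {m : ℕ}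

lemma adj_of_support_eq_map (h : W.support = (List.range m).map (fun j => p (j + 1))) :
    ∀ i ∈ Set.Ico 1 m, G.Adj (p i) (p (i + 1)) := by
  have hchain := W.isChain_adj_support
  rw [h, List.isChain_iff_getElem] at hchain
  rintro i ⟨hi1, hi2⟩
  simpa [Nat.sub_add_cancel hi1] using hchain (i - 1) (by simp; omega)

lemma IsPath.injOn_of_support_eq_map (hW : W.IsPath)
    (h : W.support = (List.range m).map (fun j => p (j + 1))) : Set.InjOn p (Set.Icc 1 m) := by
  have hnd := hW.support_nodup
  rw [h, List.nodup_map_iff_inj_on List.nodup_range] at hnd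
  rintro i ⟨hi1, hi2⟩ j ⟨hj1, hj2⟩ hij
  have := hnd (i - 1) (List.mem_range.2 (by omega)) (j - 1) (List.mem_range.2 (by omega))
    (by rwa [Nat.sub_add_cancel hi1, Nat.sub_add_cancel hj1])
  omega

end SimpleGraph.Walk

namespace WeightedTree

variable {V : Type*} [Fintype V] (T : WeightedTree V)

open SimpleGraph

def upath (x y : V) : T.G.Walk x y := (T.isTree.existsUnique_path x y).choose

lemma isPath_upath (x y : V) : (T.upath x y).IsPath :=
  (T.isTree.existsUnique_path x y).choose_spec.1

/-- The position of `p i` along the path; the `s = 0` term involves `p 0`, which is not on the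
path, but only differences of positions are ever used. -/
def pathPos (p : ℕ → V) (i : ℕ) : ℝ := ∑ s ∈ Finset.range i, T.d (p s) (p (s + 1))

/-- `p g` is the gate of `v` on the path `p(1), …, p(m)`: the path from `v` to any `p i` runs
through `p g`. -/
def IsGate (p : ℕ → V) (m : ℕ) (v : V) (g : ℕ) : Prop :=
  g ∈ Set.Icc 1 m ∧ ∀ i ∈ Set.Icc 1 m, T.d v (p i) = T.d v (p g) + |T.pathPos p i - T.pathPos p g|

def prefixWeight (g : V → ℕ) (s : ℕ) : ℝ := ∑ v with g v ≤ s, T.w v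

variable {T}

lemma eq_upath {x y : V} {Q : T.G.Walk x y} (hQ : Q.IsPath) : Q = T.upath x y :=
  (T.isTree.existsUnique_path x y).choose_spec.2 Q hQ

lemma plen_nonneg {x y : V} (Q : T.G.Walk x y) : 0 ≤ T.plen Q :=
  List.sum_nonneg fun _ h => by
    obtain ⟨e, he, rfl⟩ := List.mem_map.1 h
    exact (T.len_pos e (Q.edges_subset_edgeSet he)).le

lemma plen_pos {x y : V} (Q : T.G.Walk x y) (hxy : x ≠ y) : 0 < T.plen Q := by
  cases Q with
  | nil => exact absurd rfl hxy
  | cons hadj Q' =>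
    have hQ' := plen_nonneg Q'
    simp only [plen, Walk.edges_cons, List.map_cons, List.sum_cons] at hQ' ⊢
    linarith [T.len_pos s(_, _) hadj]

lemma d_eq_plen {x y : V} {Q : T.G.Walk x y} (hQ : Q.IsPath) : T.d x y = T.plen Q := by
  rw [eq_upath hQ]; rfl

lemma d_self (x : V) : T.d x x = 0 := by
  simp [d_eq_plen Walk.IsPath.nil, plen]

lemma d_comm (x y : V) : T.d x y = T.d y x := by
  rw [d_eq_plen (T.isPath_upath y x).reverse, d_eq_plen (T.isPath_upath y x), plen, plen,
    Walk.edges_reverse, List.map_reverse, List.sum_reverse]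

lemma d_nonneg (x y : V) : 0 ≤ T.d x y := plen_nonneg _

lemma d_pos {x y : V} (hxy : x ≠ y) : 0 < T.d x y := plen_pos _ hxy

lemma d_eq_zero_iff {x y : V} : T.d x y = 0 ↔ x = y :=
  ⟨fun h => by_contra fun hxy => (d_pos hxy).ne' h, fun h => h ▸ d_self x⟩

lemma mem_support_upath_or_mem_support_upath {u u' : V} (hadj : T.G.Adj u u') (v : V) :
    u ∈ (T.upath v u').support ∨ u' ∈ (T.upath v u).support := by
  refine or_iff_not_imp_right.2 fun hu' => ?_
  have hQ : ((T.upath v u).concat hadj).IsPath := by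
    refine Walk.IsPath.mk' ?_
    rw [Walk.support_concat, List.nodup_append]
    refine ⟨(T.isPath_upath v u).support_nodup, List.nodup_singleton _, fun a ha b hb hab => ?_⟩
    rw [List.mem_singleton] at hb
    exact hu' (hb ▸ hab ▸ ha)
  rw [← eq_upath hQ, Walk.support_concat]
  exact List.mem_append_left _ (Walk.end_mem_support _)

section PathPosition

variable {p : ℕ → V} {m : ℕ}

lemma pathPos_succ (i : ℕ) : T.pathPos p (i + 1) = T.pathPos p i + T.d (p i) (p (i + 1)) :=
  Finset.sum_range_succ _ _

lemma monotone_pathPos : Monotone (T.pathPos p) :=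
  monotone_nat_of_le_succ fun i => by simp [pathPos_succ, d_nonneg]

lemma d_succ_pos (hinj : Set.InjOn p (Set.Icc 1 m)) {i : ℕ} (hi : 1 ≤ i) (hi' : i + 1 ≤ m) :
    0 < T.d (p i) (p (i + 1)) :=
  d_pos fun h => by simpa using hinj ⟨hi, by omega⟩ ⟨by omega, hi'⟩ h

lemma strictMonoOn_pathPos (hinj : Set.InjOn p (Set.Icc 1 m)) :
    StrictMonoOn (T.pathPos p) (Set.Icc 1 m) := by
  refine strictMonoOn_of_lt_succ Set.ordConnected_Icc fun i _ hi hi' => ?_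
  rw [Order.succ_eq_add_one, pathPos_succ]
  exact lt_add_of_pos_right _ (d_succ_pos hinj hi.1 hi'.2)

lemma IsGate.eq {g i : ℕ} (hinj : Set.InjOn p (Set.Icc 1 m)) (hg : T.IsGate p m (p i) g)
    (hi : i ∈ Set.Icc 1 m) : g = i := by
  have h0 := hg.2 i hi
  rw [d_self] at h0
  have hd : T.d (p i) (p g) = 0 := by
    linarith [d_nonneg (T := T) (p i) (p g), abs_nonneg (T.pathPos p i - T.pathPos p g)]
  exact (hinj hi hg.1 (d_eq_zero_iff.1 hd)).symm

lemma prefixWeight_mono {g : V → ℕ} : Monotone (T.prefixWeight g) := fun _ _ hst =>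
  Finset.sum_le_sum_of_subset_of_nonneg (Finset.monotone_filter_right _ fun _ _ h => h.trans hst)
    fun v _ _ => T.w_nonneg v

lemma prefixWeight_lt {g : V → ℕ} (hinj : Set.InjOn p (Set.Icc 1 m))
    (hg : ∀ v, T.IsGate p m v (g v)) (hw : ∀ v, 0 < T.w v) {s t : ℕ} (hst : s < t) (ht : t ≤ m) :
    T.prefixWeight g s < T.prefixWeight g t := by
  have hgate : g (p (s + 1)) = s + 1 := (hg _).eq hinj ⟨by omega, by omega⟩
  refine Finset.sum_lt_sum_of_subset
    (Finset.monotone_filter_right _ fun _ _ h => h.trans hst.le) (i := p (s + 1)) ?_ ?_ (hw _)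
    fun v _ _ => T.w_nonneg v
  · simp [hgate, hst]
  · simp [hgate]

end PathPosition

variable [DecidableEq V]

lemma d_eq_add_of_mem_support {x y z : V} (hz : z ∈ (T.upath x y).support) :
    T.d x y = T.d x z + T.d z y := by
  have hP := T.isPath_upath x y
  have hedges := congrArg Walk.edges (Walk.take_spec (T.upath x y) hz)
  rw [d_eq_plen (hP.takeUntil hz), d_eq_plen (hP.dropUntil hz), d_eq_plen hP, plen, plen, plen,
    ← hedges, Walk.edges_append, List.map_append, List.sum_append]

lemma support_upath_of_adj {v z u : V} (hadj : T.G.Adj z u) (hz : z ∈ (T.upath v u).support) :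
    (T.upath v u).support = (T.upath v z).support ++ [u] := by
  have hP := T.isPath_upath v u
  have hdrop : (T.upath v u).dropUntil z hz = Walk.cons hadj Walk.nil :=
    (eq_upath (hP.dropUntil hz)).trans (eq_upath (by simp [hadj.ne])).symm
  conv_lhs => rw [← Walk.take_spec (T.upath v u) hz]
  rw [Walk.support_append, hdrop, ← eq_upath (hP.takeUntil hz)]
  simp

lemma eq_of_adj_of_mem_support_upath {v z z' u : V} (hadj : T.G.Adj z u) (hadj' : T.G.Adj z' u)
    (hz : z ∈ (T.upath v u).support) (hz' : z' ∈ (T.upath v u).support) : z = z' := by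
  have h := (support_upath_of_adj hadj hz).symm.trans (support_upath_of_adj hadj' hz')
  rw [List.append_cancel_right_eq] at h
  simpa [List.getLast?_eq_some_getLast, Walk.getLast_support] using congrArg List.getLast? h

section ServiceTime

variable {l : List V} {v : V}

lemma closest_mem (hl : l ≠ []) (v : V) : T.closest l v ∈ l := by
  have h : ∃ u ∈ l, ∀ u' ∈ l, T.d u v ≤ T.d u' v := by
    obtain ⟨u, hu, hmin⟩ :=
      l.toFinset.exists_min_image (T.d · v) ((List.toFinset_nonempty_iff l).2 hl)
    exact ⟨u, List.mem_toFinset.1 hu, fun u' hu' => hmin u' (List.mem_toFinset.2 hu')⟩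
  rw [closest, dif_pos h]
  exact h.choose_spec.1

lemma closest_eq_of_forall_lt {u : V} (hu : u ∈ l) (hlt : ∀ u' ∈ l, u' ≠ u → T.d u v < T.d u' v) :
    T.closest l v = u := by
  have h : ∃ u ∈ l, ∀ u' ∈ l, T.d u v ≤ T.d u' v :=
    ⟨u, hu, fun u' hu' => (eq_or_ne u' u).elim (fun h => h ▸ le_rfl) fun h => (hlt u' hu' h).le⟩
  rw [closest, dif_pos h]
  by_contra hne
  exact (hlt _ h.choose_spec.1 hne).not_ge (h.choose_spec.2 u hu)

lemma dbar_eq_sum (hnd : l.Nodup) (hl : l ≠ []) (q : V) :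
    T.dbar l q = ∑ v, T.w v * T.d (T.closest l v) q := by
  rw [dbar, ← List.sum_toFinset _ hnd,
    ← Finset.sum_fiberwise_of_maps_to (s := Finset.univ) (t := l.toFinset)
      fun v _ => List.mem_toFinset.2 (closest_mem hl v)]
  refine Finset.sum_congr rfl fun u _ => ?_
  rw [wBranch, Finset.sum_mul]
  exact Finset.sum_congr rfl fun v hv => by rw [(Finset.mem_filter.1 hv).2]

lemma Sbar_eq_sum_sum (hnd : l.Nodup) (hl : l ≠ []) :
    T.Sbar l = 1 / T.vt *
      ∑ u, ∑ v, T.w u * T.w v * T.d (T.closest l v) (T.closest l u) := by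
  rw [Sbar, Finset.mul_sum]
  refine Finset.sum_congr rfl fun u _ => ?_
  rw [s, sOn, dbar_eq_sum hnd hl, Finset.mul_sum, Finset.mul_sum, Finset.mul_sum]
  exact Finset.sum_congr rfl fun v _ => by ring

end ServiceTime

section Gates

variable {p : ℕ → V} {m : ℕ}

lemma exists_isGate (hadj : ∀ i ∈ Set.Ico 1 m, T.G.Adj (p i) (p (i + 1)))
    (hinj : Set.InjOn p (Set.Icc 1 m)) (hm : 1 ≤ m) (v : V) : ∃ g, T.IsGate p m v g := by
  obtain ⟨g, hg, hdist⟩ := exists_eq_add_abs_sub_of_steps (f := fun i => T.d v (p i))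
    -- `R i`: the edge `p i p(i+1)` points away from `v`
    (R := fun i => p i ∈ (T.upath v (p (i + 1))).support) hm (monotone_pathPos (T := T))
    (fun i hi hi' hR => by
      refine (mem_support_upath_or_mem_support_upath (hadj (i + 1) ⟨by omega, by omega⟩)
        v).resolve_right fun hR' => ?_
      have := hinj ⟨hi, by omega⟩ ⟨by omega, by omega⟩ (eq_of_adj_of_mem_support_upath
        (hadj i ⟨hi, by omega⟩) (hadj (i + 1) ⟨by omega, by omega⟩).symm hR hR')
      omega)
    (fun i _ _ hR => by
      rw [pathPos_succ, add_sub_cancel_left]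
      exact d_eq_add_of_mem_support hR)
    (fun i hi hi' hR => by
      rw [pathPos_succ, add_sub_cancel_left, d_comm (p i)]
      exact d_eq_add_of_mem_support
        ((mem_support_upath_or_mem_support_upath (hadj i ⟨hi, hi'⟩) v).resolve_left hR))
  exact ⟨g, hg, hdist⟩

lemma d_eq_abs_pathPos (hadj : ∀ i ∈ Set.Ico 1 m, T.G.Adj (p i) (p (i + 1)))
    (hinj : Set.InjOn p (Set.Icc 1 m)) {i j : ℕ} (hi : i ∈ Set.Icc 1 m) (hj : j ∈ Set.Icc 1 m) :
    T.d (p i) (p j) = |T.pathPos p i - T.pathPos p j| := by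
  obtain ⟨g, hg⟩ := exists_isGate hadj hinj (hi.1.trans hi.2) (p i)
  obtain rfl := hg.eq hinj hi
  rw [hg.2 j hj, d_self, zero_add, abs_sub_comm]

variable {g : V → ℕ}

lemma closest_seg (hinj : Set.InjOn p (Set.Icc 1 m)) (hg : ∀ v, T.IsGate p m v (g v)) {a b : ℕ}
    (ha : 1 ≤ a) (hab : a ≤ b) (hb : b ≤ m) (v : V) :
    T.closest (seg p a b) v = p (max a (min b (g v))) := by
  obtain ⟨⟨hg1, hgm⟩, hdist⟩ := hg v
  refine closest_eq_of_forall_lt (mem_seg.2 ⟨_, ⟨by omega, by omega⟩, rfl⟩) fun u hu hne => ?_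
  obtain ⟨i, ⟨hai, hib⟩, rfl⟩ := mem_seg.1 hu
  have hlt := abs_sub_lt_abs_sub_clamp
    ((strictMonoOn_pathPos (T := T) hinj).mono (Set.Icc_subset_Icc (by omega) (by omega)))
    ⟨hai, hib⟩ fun h => hne (h ▸ rfl)
  rw [d_comm, d_comm (p i), hdist _ ⟨by omega, by omega⟩, hdist i ⟨by omega, by omega⟩]
  linarith

lemma Sbar_seg (hadj : ∀ i ∈ Set.Ico 1 m, T.G.Adj (p i) (p (i + 1)))
    (hinj : Set.InjOn p (Set.Icc 1 m)) (hg : ∀ v, T.IsGate p m v (g v)) {a b : ℕ}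
    (ha : 1 ≤ a) (hab : a ≤ b) (hb : b ≤ m) :
    T.Sbar (seg p a b) = 2 / T.vt * ∑ s ∈ Finset.Ico a b,
      T.d (p s) (p (s + 1)) * (T.prefixWeight g s * (T.wT - T.prefixWeight g s)) := by
  have hsep : ∀ u v, T.d (T.closest (seg p a b) v) (T.closest (seg p a b) u)
      = ∑ s ∈ Finset.Ico a b, if (g u ≤ s ↔ g v ≤ s) then 0 else T.d (p s) (p (s + 1)) := by
    intro u v
    have hclamp : ∀ x, max a (min b (g x)) ∈ Set.Icc a b :=
      fun x => ⟨le_max_left _ _, max_le hab (min_le_left _ _)⟩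
    have hsub : Set.Icc a b ⊆ Set.Icc 1 m := Set.Icc_subset_Icc ha hb
    rw [closest_seg hinj hg ha hab hb, closest_seg hinj hg ha hab hb,
      d_eq_abs_pathPos hadj hinj (hsub (hclamp v)) (hsub (hclamp u)), pathPos, pathPos,
      abs_sum_range_sub_sum_range (fun s => d_nonneg _ _) (hclamp v) (hclamp u)]
    refine Finset.sum_congr rfl fun s hs => ?_
    have hs := Finset.mem_Ico.1 hs
    exact if_congr (by omega) rfl rfl
  have hcompl : ∀ s, ∑ v with ¬ g v ≤ s, T.w v = T.wT - T.prefixWeight g s := fun s => by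
    rw [wT, prefixWeight, ← Finset.sum_filter_add_sum_filter_not Finset.univ (g · ≤ s) T.w,
      add_sub_cancel_left]
  have hswap : ∑ u, ∑ v, T.w u * T.w v * T.d (T.closest (seg p a b) v) (T.closest (seg p a b) u)
      = ∑ s ∈ Finset.Ico a b, ∑ u, ∑ v, T.w u * T.w v *
          if (g u ≤ s ↔ g v ≤ s) then 0 else T.d (p s) (p (s + 1)) := by
    simp_rw [hsep, Finset.mul_sum]
    exact (Finset.sum_congr rfl fun _ _ => Finset.sum_comm).trans Finset.sum_comm
  rw [Sbar_eq_sum_sum (nodup_seg (hinj.mono (Set.Icc_subset_Icc ha hb))) (seg_ne_nil hab), hswap,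
    Finset.mul_sum, Finset.mul_sum]
  refine Finset.sum_congr rfl fun s _ => ?_
  rw [sum_sum_mul_ite_iff T.w (g · ≤ s), hcompl, prefixWeight]
  ring

lemma Sbar_seg_succ_sub_Sbar_seg (hadj : ∀ i ∈ Set.Ico 1 m, T.G.Adj (p i) (p (i + 1)))
    (hinj : Set.InjOn p (Set.Icc 1 m)) (hg : ∀ v, T.IsGate p m v (g v)) {x y : ℕ}
    (hx : 1 ≤ x) (hxy : x ≤ y) (hy : y + 1 ≤ m)
    (hlen : T.d (p x) (p y) = T.d (p (x + 1)) (p (y + 1))) :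
    T.Sbar (seg p (x + 1) (y + 1)) - T.Sbar (seg p x y) =
      2 / T.vt * T.d (p x) (p (x + 1)) * ((T.prefixWeight g y - T.prefixWeight g x) *
        (T.wT - T.prefixWeight g x - T.prefixWeight g y)) := by
  have hμ : T.d (p y) (p (y + 1)) = T.d (p x) (p (x + 1)) := by
    rw [d_eq_abs_pathPos hadj hinj ⟨hx, by omega⟩ ⟨by omega, by omega⟩,
      d_eq_abs_pathPos hadj hinj ⟨by omega, by omega⟩ ⟨by omega, hy⟩, abs_sub_comm,
      abs_sub_comm (T.pathPos p (x + 1)), abs_of_nonneg (sub_nonneg.2 (monotone_pathPos hxy)),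
      abs_of_nonneg (sub_nonneg.2 (monotone_pathPos (by omega)))] at hlen
    linarith [pathPos_succ (T := T) (p := p) x, pathPos_succ (T := T) (p := p) y]
  set φ : ℕ → ℝ := fun s =>
    T.d (p s) (p (s + 1)) * (T.prefixWeight g s * (T.wT - T.prefixWeight g s)) with hφ
  have htop := Finset.sum_Ico_succ_top hxy φ
  have hbot := Finset.sum_eq_sum_Ico_succ_bot (Nat.lt_succ_of_le hxy) φ
  rw [Sbar_seg hadj hinj hg (by omega) (by omega) hy, Sbar_seg hadj hinj hg hx hxy (by omega)]
  simp only [hφ, hμ] at htop hbot ⊢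
  linear_combination (2 / T.vt) * (htop - hbot)

lemma Sbar_seg_shift_lt_of_lt (hadj : ∀ i ∈ Set.Ico 1 m, T.G.Adj (p i) (p (i + 1)))
    (hinj : Set.InjOn p (Set.Icc 1 m)) (hg : ∀ v, T.IsGate p m v (g v)) (hw : ∀ v, 0 < T.w v)
    {j k : ℕ} {l : ℝ} (hk : 2 ≤ k) (hj : 1 ≤ j) (hjk : j + k + 1 ≤ m)
    (hlen : ∀ i ∈ Set.Icc j (j + 2), T.d (p i) (p (i + k - 1)) = l)
    (hdec : T.Sbar (seg p (j + 1) (j + k)) < T.Sbar (seg p j (j + k - 1))) :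
    T.Sbar (seg p (j + 2) (j + k + 1)) < T.Sbar (seg p (j + 1) (j + k)) := by
  set C := T.prefixWeight g
  have hshift : ∀ i ∈ Set.Icc j (j + 1),
      T.Sbar (seg p (i + 1) (i + k)) - T.Sbar (seg p i (i + k - 1)) = 2 / T.vt *
        T.d (p i) (p (i + 1)) * ((C (i + k - 1) - C i) * (T.wT - C i - C (i + k - 1))) := by
    rintro i ⟨hji, hij⟩
    have hlen' : T.d (p i) (p (i + k - 1)) = T.d (p (i + 1)) (p (i + k - 1 + 1)) := by
      rw [show i + k - 1 + 1 = i + 1 + k - 1 by omega, hlen i ⟨hji, by omega⟩,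
        hlen (i + 1) ⟨by omega, by omega⟩]
    have h := Sbar_seg_succ_sub_Sbar_seg hadj hinj hg (by omega) (by omega) (by omega) hlen'
    rwa [show i + k - 1 + 1 = i + k by omega] at h
  have hfactor : ∀ i, 1 ≤ i → i + 1 ≤ m → 0 < 2 / T.vt * T.d (p i) (p (i + 1)) :=
    fun i hi hi' => mul_pos (div_pos two_pos T.vt_pos) (d_succ_pos hinj hi hi')
  have hC₀ : C j < C (j + k - 1) := prefixWeight_lt hinj hg hw (by omega) (by omega)
  have hneg : T.wT - C j - C (j + k - 1) < 0 := by
    refine neg_of_mul_neg_right (neg_of_mul_neg_right ?_ (hfactor j hj (by omega)).le)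
      (sub_nonneg.2 hC₀.le)
    linarith [hshift j ⟨le_rfl, by omega⟩]
  have hneg' : T.wT - C (j + 1) - C (j + k) < 0 := by
    have hCj : C j ≤ C (j + 1) := prefixWeight_mono (by omega)
    have hCk : C (j + k - 1) ≤ C (j + k) := prefixWeight_mono (by omega)
    linarith
  have h := hshift (j + 1) ⟨by omega, le_rfl⟩
  rw [show j + 1 + k - 1 = j + k by omega, show j + 1 + k = j + k + 1 by omega] at h
  have hC₁ : C (j + 1) < C (j + k) := prefixWeight_lt hinj hg hw (by omega) (by omega)
  have := mul_neg_of_pos_of_neg (hfactor (j + 1) (by omega) (by omega))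
    (mul_neg_of_pos_of_neg (sub_pos.2 hC₁) hneg')
  show T.Sbar (seg p (j + 1 + 1) (j + k + 1)) < T.Sbar (seg p (j + 1) (j + k))
  linarith

end Gates

end WeightedTree

open WeightedTree in
theorem sbar_shift_unimodal_general {V : Type*} [Fintype V] [DecidableEq V]
    (T : WeightedTree V) {x y : V} (W : T.G.Walk x y) (hW : W.IsPath)
    (m k : ℕ) (hk : 2 ≤ k) (p : ℕ → V)
    (hsupp : W.support = (List.range m).map (fun j => p (j + 1)))
    (hwpos : ∀ v, 0 < T.w v) (l : ℝ)
    (hlen : ∀ j ∈ Finset.Icc 1 (m - k + 1), T.d (p j) (p (j + k - 1)) = l) :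
    ∀ j, 1 ≤ j → j ≤ m - k - 1 →
      T.Sbar (seg p j (j + k - 1)) > T.Sbar (seg p (j + 1) (j + k)) →
      T.Sbar (seg p (j + 1) (j + k)) > T.Sbar (seg p (j + 2) (j + k + 1)) := by
  intro j hj hjm hdec
  have hadj := SimpleGraph.Walk.adj_of_support_eq_map hsupp
  have hinj := hW.injOn_of_support_eq_map hsupp
  choose g hg using exists_isGate hadj hinj (by omega)
  exact Sbar_seg_shift_lt_of_lt hadj hinj hg hwpos hk hj (by omega)
    (fun i ⟨hji, hij⟩ => hlen i (Finset.mem_Icc.2 ⟨by omega, by omega⟩)) hdec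

/-- as a subpath of fixed length `l` is shifted along the path
`p(1), …, p(m)`, the mean service time `S̄` is increasing–decreasing (unimodal). -/
theorem sbar_shift_unimodal {V : Type*} [Fintype V] [DecidableEq V]
    (T : WeightedTree V) {x y : V} (W : T.G.Walk x y) (hW : W.IsPath)
    (m k : ℕ) (hk : 2 ≤ k) (hkm : k ≤ m) (p : ℕ → V)
    (hsupp : W.support = (List.range m).map (fun j => p (j + 1)))
    (hwpos : ∀ v, 0 < T.w v) (l : ℝ)
    (hlen : ∀ j ∈ Finset.Icc 1 (m - k + 1), T.d (p j) (p (j + k - 1)) = l) :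
    ∀ j, 1 ≤ j → j ≤ m - k - 1 →
      T.Sbar (seg p j (j + k - 1)) > T.Sbar (seg p (j + 1) (j + k)) →
      T.Sbar (seg p (j + 1) (j + k)) > T.Sbar (seg p (j + 2) (j + k + 1)) :=
  sbar_shift_unimodal_general T W hW m k hk p hsupp hwpos l hlen
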